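/- There exists R₀ > 1 such that for all R > R₀: H⁻¹(V⁺) ⊂ V⁺, and there exist constants C₁, C₂ > 0 (depending only on a, b) such that for every w = (x,y,z) ∈ V⁺, writing H⁻¹(w) = (x₁,y₁,z₁), one has C₁|z|³ < |z₁| < C₂|z|³. -/

import Mathlib

open Complex Filter Topology

/-- The quadratic automorphism `H(x,y,z) = (xy + az, x² + by, x)` of `ℂ³`. -/
noncomputable def H (a b : ℂ) (w : ℂ × ℂ × ℂ) : ℂ × ℂ × ℂ :=
  (w.1 * w.2.1 + a * w.2.2, w.1 ^ 2 + b * w.2.1, w.1)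

/-- The inverse automorphism
`H⁻¹(x,y,z) = (z, (y − z²)/b, (x − z(y − z²)/b)/a)`. -/
noncomputable def Hinv (a b : ℂ) (w : ℂ × ℂ × ℂ) : ℂ × ℂ × ℂ :=
  (w.2.2, (w.2.1 - w.2.2 ^ 2) / b,
    (w.1 - w.2.2 * ((w.2.1 - w.2.2 ^ 2) / b)) / a)

/-- `V⁺ = {(x,y,z) : |z| > max{R, |x|, (1+δ)|y|^{1/2}}}`. -/
def Vplus (δ R : ℝ) : Set (ℂ × ℂ × ℂ) :=
  {w | ‖w.2.2‖ >
    max R (max (‖w.1‖) ((1 + δ) * Real.sqrt (‖w.2.1‖)))}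

/-- `U⁻ = ⋃_{n≥0} Hⁿ(V⁺)`. -/
noncomputable def Uminus (a b : ℂ) (δ R : ℝ) : Set (ℂ × ℂ × ℂ) :=
  ⋃ n : ℕ, (H a b)^[n] '' Vplus δ R

/-- `K⁻ = ℂ³ \ U⁻`. -/
noncomputable def Kminus (a b : ℂ) (δ R : ℝ) : Set (ℂ × ℂ × ℂ) :=
  (Uminus a b δ R)ᶜ

/-! On `V⁺` we have `‖y‖ < ‖z‖² / (1+δ)²`, so `y - z²` is comparable to `z²` and
`y₁ = (y - z²)/b` to `‖z‖²`. Then `z₁ = (x - z y₁)/a` is comparable to `‖z‖³`, since `‖x‖ < ‖z‖`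
is of lower order. Once `‖z‖` is large, `‖z₁‖ ≳ ‖z‖³` dominates `R`, `‖z‖` and
`(1+δ) √‖y₁‖ ≲ ‖z‖`, so `H⁻¹(w)` lies in `V⁺` again. -/

/-- `(1 - (1+δ)⁻²) / (1+δ)`: on `V⁺`, `‖y - z²‖ > (1 - (1+δ)⁻²) ‖z‖²`, and `‖b‖ = 1+δ`. -/
noncomputable def escapeRate (δ : ℝ) : ℝ := δ * (2 + δ) / (1 + δ) ^ 3

/-- Beyond this radius `escapeRate δ * ‖z‖² > 2 + 4 (1+δ) ‖a‖`, which absorbs the error terms. -/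
noncomputable def escapeRadius (a : ℂ) (δ : ℝ) : ℝ :=
  1 + (2 + 4 * (1 + δ) * ‖a‖) / escapeRate δ

lemma escapeRate_pos {δ : ℝ} (hδ : 0 < δ) : 0 < escapeRate δ := by
  unfold escapeRate; positivity

lemma one_lt_escapeRadius (a : ℂ) {δ : ℝ} (hδ : 0 < δ) : 1 < escapeRadius a δ := by
  have hκ := escapeRate_pos hδ
  unfold escapeRadius
  have : 0 < (2 + 4 * (1 + δ) * ‖a‖) / escapeRate δ := by positivity
  linarith

lemma norm_sub_sq_bounds {𝕜 : Type*} [NormedDivisionRing 𝕜] {s : ℝ} {y z : 𝕜}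
    (h : ‖y‖ < s * ‖z‖ ^ 2) :
    (1 - s) * ‖z‖ ^ 2 < ‖y - z ^ 2‖ ∧ ‖y - z ^ 2‖ < (1 + s) * ‖z‖ ^ 2 := by
  have lo := norm_sub_norm_le (z ^ 2) y
  have hi := norm_sub_le y (z ^ 2)
  rw [norm_sub_rev, norm_pow] at lo
  rw [norm_pow] at hi
  constructor <;> linarith

section Estimates

variable {a b : ℂ} {δ R : ℝ} {w : ℂ × ℂ × ℂ}

lemma mem_Vplus_iff : w ∈ Vplus δ R ↔
    R < ‖w.2.2‖ ∧ ‖w.1‖ < ‖w.2.2‖ ∧ (1 + δ) * √‖w.2.1‖ < ‖w.2.2‖ := by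
  simp only [Vplus, Set.mem_ofPred_eq, gt_iff_lt, max_lt_iff]

lemma norm_snd_fst_lt_of_mem_Vplus (hδ : 0 ≤ δ) (hw : w ∈ Vplus δ R) :
    ‖w.2.1‖ < ((1 + δ) ^ 2)⁻¹ * ‖w.2.2‖ ^ 2 := by
  have h := pow_lt_pow_left₀ (mem_Vplus_iff.1 hw).2.2 (by positivity) two_ne_zero
  rw [mul_pow, Real.sq_sqrt (norm_nonneg _)] at h
  rw [inv_mul_eq_div, lt_div_iff₀ (by positivity)]
  linarith

lemma norm_Hinv_snd_fst_bounds (hδ : 0 < δ) (hb : ‖b‖ = 1 + δ) (hw : w ∈ Vplus δ R) :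
    escapeRate δ * ‖w.2.2‖ ^ 2 < ‖(Hinv a b w).2.1‖ ∧
      ‖(Hinv a b w).2.1‖ < 2 * ‖w.2.2‖ ^ 2 := by
  obtain ⟨lo, hi⟩ := norm_sub_sq_bounds (norm_snd_fst_lt_of_mem_Vplus hδ.le hw)
  have hy₁ : ‖(Hinv a b w).2.1‖ = ‖w.2.1 - w.2.2 ^ 2‖ / (1 + δ) := by
    simp only [Hinv, norm_div, hb]
  have hrate : escapeRate δ * (1 + δ) = 1 - ((1 + δ) ^ 2)⁻¹ := by
    unfold escapeRate; field_simp; ring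
  have hs : ((1 + δ) ^ 2)⁻¹ < 1 := inv_lt_one_of_one_lt₀ (by nlinarith)
  have hz := sq_nonneg ‖w.2.2‖
  rw [hy₁, lt_div_iff₀ (by positivity), div_lt_iff₀ (by positivity)]
  constructor
  · rw [mul_right_comm, hrate]; exact lo
  · nlinarith

lemma norm_Hinv_snd_snd_bounds (ha : a ≠ 0) (hδ : 0 < δ) (hb : ‖b‖ = 1 + δ) (hR : 1 ≤ R)
    (hw : w ∈ Vplus δ R) :
    escapeRate δ * ‖w.2.2‖ ^ 3 - ‖w.2.2‖ < ‖a‖ * ‖(Hinv a b w).2.2‖ ∧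
      ‖a‖ * ‖(Hinv a b w).2.2‖ < 3 * ‖w.2.2‖ ^ 3 := by
  obtain ⟨hRz, hxz, -⟩ := mem_Vplus_iff.1 hw
  obtain ⟨lo, hi⟩ := norm_Hinv_snd_fst_bounds (a := a) hδ hb hw
  have hz₁ : ‖a‖ * ‖(Hinv a b w).2.2‖ = ‖w.1 - w.2.2 * (Hinv a b w).2.1‖ := by
    simp only [Hinv, norm_div]
    field_simp [norm_ne_zero_iff.2 ha]
  have lo' := norm_sub_norm_le (w.2.2 * (Hinv a b w).2.1) w.1
  have hi' := norm_sub_le w.1 (w.2.2 * (Hinv a b w).2.1)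
  rw [norm_sub_rev, norm_mul] at lo'
  rw [norm_mul] at hi'
  have hz : 0 < ‖w.2.2‖ := by linarith
  have hzz : ‖w.2.2‖ < ‖w.2.2‖ ^ 3 := by nlinarith
  have lo'' := mul_lt_mul_of_pos_left lo hz
  have hi'' := mul_lt_mul_of_pos_left hi hz
  rw [hz₁]
  constructor <;> linarith

lemma norm_Hinv_snd_snd_bounds_of_large (ha : a ≠ 0) (hδ : 0 < δ) (hb : ‖b‖ = 1 + δ)
    (hR : escapeRadius a δ < R) (hw : w ∈ Vplus δ R) :
    escapeRate δ / (2 * ‖a‖) * ‖w.2.2‖ ^ 3 < ‖(Hinv a b w).2.2‖ ∧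
      ‖(Hinv a b w).2.2‖ < 3 / ‖a‖ * ‖w.2.2‖ ^ 3 ∧
      2 * (1 + δ) * ‖w.2.2‖ < ‖(Hinv a b w).2.2‖ := by
  have hA : 0 < ‖a‖ := norm_pos_iff.2 ha
  have hκ := escapeRate_pos hδ
  have hRz := (mem_Vplus_iff.1 hw).1
  have h1R := one_lt_escapeRadius a hδ
  obtain ⟨lo, hi⟩ := norm_Hinv_snd_snd_bounds ha hδ hb (by linarith) hw
  set Z := ‖w.2.2‖
  have hZ : 1 < Z := by linarith
  have hκZ : (2 + 4 * (1 + δ) * ‖a‖) * Z < escapeRate δ * Z ^ 3 := by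
    have hZZ : Z < Z ^ 2 := by nlinarith
    have h := (div_lt_iff₀ hκ).1 (lt_sub_iff_add_lt'.2 hR)
    have h' : 2 + 4 * (1 + δ) * ‖a‖ < escapeRate δ * Z ^ 2 := by nlinarith
    calc (2 + 4 * (1 + δ) * ‖a‖) * Z < escapeRate δ * Z ^ 2 * Z :=
          mul_lt_mul_of_pos_right h' (by linarith)
      _ = escapeRate δ * Z ^ 3 := by ring
  have hz₁ : escapeRate δ / (2 * ‖a‖) * Z ^ 3 < ‖(Hinv a b w).2.2‖ := by
    rw [div_mul_eq_mul_div, div_lt_iff₀ (by positivity)]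
    have : 0 ≤ (1 + δ) * ‖a‖ * Z := by positivity
    linarith
  refine ⟨hz₁, by rw [div_mul_eq_mul_div, lt_div_iff₀ hA]; linarith, lt_of_le_of_lt ?_ hz₁⟩
  rw [div_mul_eq_mul_div, le_div_iff₀ (by positivity)]
  linarith

lemma Hinv_mem_Vplus (hδ : 0 ≤ δ) (hR : 0 ≤ R) (hw : w ∈ Vplus δ R)
    (hy₁ : ‖(Hinv a b w).2.1‖ < 2 * ‖w.2.2‖ ^ 2)
    (hz₁ : 2 * (1 + δ) * ‖w.2.2‖ < ‖(Hinv a b w).2.2‖) : Hinv a b w ∈ Vplus δ R := by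
  obtain ⟨hRz, -, -⟩ := mem_Vplus_iff.1 hw
  have hsqrt : √‖(Hinv a b w).2.1‖ < 2 * ‖w.2.2‖ := by
    rw [Real.sqrt_lt' (by linarith)]; nlinarith
  have hzz₁ : ‖w.2.2‖ < ‖(Hinv a b w).2.2‖ := by nlinarith [norm_nonneg w.2.2]
  refine mem_Vplus_iff.2 ⟨hRz.trans hzz₁, hzz₁, ?_⟩
  calc (1 + δ) * √‖(Hinv a b w).2.1‖ < (1 + δ) * (2 * ‖w.2.2‖) := by gcongr
    _ = 2 * (1 + δ) * ‖w.2.2‖ := by ring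
    _ < _ := hz₁

end Estimates

theorem stmt1 (a b : ℂ) (ha : a ≠ 0) (δ : ℝ) (hδ : 0 < δ)
    (hbδ : ‖b‖ = 1 + δ) :
    ∃ R₀ > (1 : ℝ), ∃ C₁ > (0 : ℝ), ∃ C₂ > (0 : ℝ), ∀ R > R₀,
      Hinv a b '' Vplus δ R ⊆ Vplus δ R ∧
      ∀ w ∈ Vplus δ R,
        C₁ * (‖w.2.2‖) ^ 3 < ‖(Hinv a b w).2.2‖ ∧
        ‖(Hinv a b w).2.2‖ < C₂ * (‖w.2.2‖) ^ 3 := by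
  have hA : 0 < ‖a‖ := norm_pos_iff.2 ha
  have hκ := escapeRate_pos hδ
  refine ⟨escapeRadius a δ, one_lt_escapeRadius a hδ, escapeRate δ / (2 * ‖a‖), by positivity,
    3 / ‖a‖, by positivity, fun R hR => ⟨?_, fun w hw => ?_⟩⟩
  · rintro _ ⟨w, hw, rfl⟩
    have h1R := one_lt_escapeRadius a hδ
    exact Hinv_mem_Vplus hδ.le (by linarith) hw (norm_Hinv_snd_fst_bounds hδ hbδ hw).2
      (norm_Hinv_snd_snd_bounds_of_large ha hδ hbδ hR hw).2.2
  · obtain ⟨lo, hi, -⟩ := norm_Hinv_snd_snd_bounds_of_large ha hδ hbδ hR hw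
    exact ⟨lo, hi⟩
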